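/- arXiv:1605.04499 — 3 statements merged into one kernel-verified Lean document; each statement's English description precedes it below -/
import Mathlib

section
/- Chain rule for ∂ under left paravector translation (Theorem 3.1 of the paper): let Γ be a constant paravector, let T_Γ : ℂ⁴ → ℂ⁴ be the linear map X ↦ ΓX given by left paravector multiplication on space-time points X = (t, 𝐱), identified with paravectors, and let C : ℂ⁴ → ℂ × ℂ³ be a holomorphic paravector field. Then for all X, ∂(C ∘ T_Γ)(X) = ∂(Γ·C)(T_Γ X), i.e., applying ∂ to X ↦ C(ΓX) at X agrees with applying ∂ to the field Y ↦ Γ·C(Y) evaluated at ΓX. -/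
noncomputable section
open scoped BigOperators

abbrev Vec3 : Type := Fin 3 → ℂ
abbrev Pv : Type := ℂ × Vec3

def dot3 (a b : Vec3) : ℂ := ∑ i, a i * b i

def cross3 (a b : Vec3) : Vec3 :=
  ![a 1 * b 2 - a 2 * b 1, a 2 * b 0 - a 0 * b 2, a 0 * b 1 - a 1 * b 0]

def pmul (A B : Pv) : Pv :=
  (A.1 * B.1 + dot3 A.2 B.2,
   fun j => A.1 * B.2 j + B.1 * A.2 j + Complex.I * cross3 A.2 B.2 j)

def detP (A : Pv) : ℂ := A.1 ^ 2 - dot3 A.2 A.2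

def revP (A : Pv) : Pv := (A.1, -A.2)

abbrev CPt : Type := Fin 4 → ℂ

def toPv (X : CPt) : Pv := (X 0, fun i => X i.succ)

def ofPv (A : Pv) : CPt := Fin.cons A.1 A.2

def cpd (i : Fin 4) (f : CPt → ℂ) (x : CPt) : ℂ := fderiv ℂ f x (Pi.single i 1)

def cdiv3 (Φ : CPt → Vec3) (x : CPt) : ℂ := ∑ i : Fin 3, cpd i.succ (fun y => Φ y i) x

def cgrad3 (f : CPt → ℂ) (x : CPt) : Vec3 := fun i => cpd i.succ f x

def ccurl3 (Φ : CPt → Vec3) (x : CPt) : Vec3 :=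
  ![cpd 2 (fun y => Φ y 2) x - cpd 3 (fun y => Φ y 1) x,
    cpd 3 (fun y => Φ y 0) x - cpd 1 (fun y => Φ y 2) x,
    cpd 1 (fun y => Φ y 1) x - cpd 2 (fun y => Φ y 0) x]

def Dc (A : CPt → Pv) (x : CPt) : Pv :=
  (cpd 0 (fun y => (A y).1) x + cdiv3 (fun y => (A y).2) x,
   fun j => cpd 0 (fun y => (A y).2 j) x + cgrad3 (fun y => (A y).1) x j
     + Complex.I * ccurl3 (fun y => (A y).2) x j)

def Dcm (A : CPt → Pv) (x : CPt) : Pv :=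
  (cpd 0 (fun y => (A y).1) x - cdiv3 (fun y => (A y).2) x,
   fun j => cpd 0 (fun y => (A y).2 j) x - cgrad3 (fun y => (A y).1) x j
     - Complex.I * ccurl3 (fun y => (A y).2) x j)


section DcAux

-- left paravector multiplication is ℂ-linear
def PL (Γ : Pv) : Pv →ₗ[ℂ] Pv where
  toFun B := pmul Γ B
  map_add' A B := by
    refine Prod.ext ?_ (funext fun j => ?_) <;>
      simp [pmul, dot3, cross3, Fin.sum_univ_three] <;> [ring; (fin_cases j <;> simp <;> ring)]
  map_smul' c B := by
    refine Prod.ext ?_ (funext fun j => ?_) <;>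
      simp [pmul, dot3, cross3, Fin.sum_univ_three, smul_eq_mul] <;>
        [ring; (fin_cases j <;> simp <;> ring)]

def PLc (Γ : Pv) : Pv →L[ℂ] Pv := (PL Γ).toContinuousLinearMap

def TL (Γ : Pv) : CPt →ₗ[ℂ] CPt where
  toFun y := ofPv (pmul Γ (toPv y))
  map_add' a b := by
    show ofPv (pmul Γ (toPv (a + b))) = ofPv (pmul Γ (toPv a)) + ofPv (pmul Γ (toPv b))
    have h : toPv (a + b) = toPv a + toPv b := rfl
    have h2 := (PL Γ).map_add (toPv a) (toPv b)
    simp only [PL, LinearMap.coe_mk, AddHom.coe_mk] at h2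
    rw [h, h2]
    refine funext (Fin.cases ?_ fun i => ?_) <;> simp [ofPv]
  map_smul' c a := by
    show ofPv (pmul Γ (toPv (c • a))) = c • ofPv (pmul Γ (toPv a))
    have h : toPv (c • a) = c • toPv a := rfl
    have h2 := (PL Γ).map_smul c (toPv a)
    simp only [PL, LinearMap.coe_mk, AddHom.coe_mk] at h2
    rw [h, h2]
    refine funext (Fin.cases ?_ fun i => ?_) <;> simp [ofPv]

def TLc (Γ : Pv) : CPt →L[ℂ] CPt := (TL Γ).toContinuousLinearMap

lemma fs0 : Fin.succ (0 : Fin 3) = (1 : Fin 4) := rfl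
lemma fs1 : Fin.succ (1 : Fin 3) = (2 : Fin 4) := rfl
lemma fs2 : Fin.succ (2 : Fin 3) = (3 : Fin 4) := rfl

lemma basis_expand (v : CPt) : v = ∑ k, v k • (Pi.single k 1 : CPt) := by
  funext j; simp [Finset.sum_apply, Pi.single_apply]

lemma clm_pi (g : CPt →L[ℂ] Pv) (v : CPt) : g v = ∑ k, v k • g (Pi.single k 1) := by
  conv_lhs => rw [basis_expand v]
  rw [map_sum]; simp

lemma ofPv_zero' (A : Pv) : ofPv A 0 = A.1 := rfl
lemma ofPv_one' (A : Pv) : ofPv A 1 = A.2 0 := rfl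
lemma ofPv_two' (A : Pv) : ofPv A 2 = A.2 1 := rfl
lemma ofPv_three' (A : Pv) : ofPv A 3 = A.2 2 := rfl

end DcAux

set_option maxHeartbeats 2000000 in
theorem Dc_left_translation (Γ : Pv) (C : CPt → Pv) (hC : Differentiable ℂ C) :
    ∀ x : CPt,
      Dc (fun y => C (ofPv (pmul Γ (toPv y)))) x =
        Dc (fun y => pmul Γ (C y)) (ofPv (pmul Γ (toPv x))) := by
  intro x
  set z : CPt := ofPv (pmul Γ (toPv x)) with hz
  set D : CPt →L[ℂ] Pv := fderiv ℂ C z with hD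
  have hT : HasFDerivAt (fun y => ofPv (pmul Γ (toPv y))) (TLc Γ) x :=
    (TLc Γ).hasFDerivAt
  have hF : HasFDerivAt (fun y => C (ofPv (pmul Γ (toPv y)))) (D.comp (TLc Γ)) x :=
    HasFDerivAt.comp x (hC z).hasFDerivAt hT
  have hG : HasFDerivAt (fun y => pmul Γ (C y)) ((PLc Γ).comp D) z :=
    HasFDerivAt.comp z ((PLc Γ).hasFDerivAt) (hC z).hasFDerivAt
  obtain ⟨p, hp⟩ : ∃ p : Fin 4 → Pv, ∀ k, D (Pi.single k 1) = p k := ⟨_, fun _ => rfl⟩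
  have hw : ∀ i : Fin 4, D ((TLc Γ) (Pi.single i 1))
      = ∑ k, ((TLc Γ) (Pi.single i 1)) k • p k := fun i =>
    (clm_pi D _).trans (by simp only [hp])
  have hL1 : ∀ i, cpd i (fun y => (C (ofPv (pmul Γ (toPv y)))).1) x
      = (∑ k, ((TLc Γ) (Pi.single i 1)) k • p k).1 := by
    intro i
    have h1 : HasFDerivAt (fun y => (C (ofPv (pmul Γ (toPv y)))).1)
        ((ContinuousLinearMap.fst ℂ ℂ Vec3).comp (D.comp (TLc Γ))) x :=
      HasFDerivAt.comp x (ContinuousLinearMap.fst ℂ ℂ Vec3).hasFDerivAt hF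
    rw [cpd, h1.fderiv, ← hw]; rfl
  have hL2 : ∀ (i : Fin 4) (k : Fin 3), cpd i (fun y => (C (ofPv (pmul Γ (toPv y)))).2 k) x
      = (∑ m, ((TLc Γ) (Pi.single i 1)) m • p m).2 k := by
    intro i k
    have h1 : HasFDerivAt (fun y => (C (ofPv (pmul Γ (toPv y)))).2 k)
        (((ContinuousLinearMap.proj k).comp (ContinuousLinearMap.snd ℂ ℂ Vec3)).comp
          (D.comp (TLc Γ))) x :=
      HasFDerivAt.comp x
        ((ContinuousLinearMap.proj k).comp (ContinuousLinearMap.snd ℂ ℂ Vec3)).hasFDerivAt hF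
    rw [cpd, h1.fderiv, ← hw]; rfl
  have hR1 : ∀ i, cpd i (fun y => (pmul Γ (C y)).1) z = (pmul Γ (p i)).1 := by
    intro i
    have h1 : HasFDerivAt (fun y => (pmul Γ (C y)).1)
        ((ContinuousLinearMap.fst ℂ ℂ Vec3).comp ((PLc Γ).comp D)) z :=
      HasFDerivAt.comp z (ContinuousLinearMap.fst ℂ ℂ Vec3).hasFDerivAt hG
    rw [cpd, h1.fderiv, ← hp]; rfl
  have hR2 : ∀ (i : Fin 4) (k : Fin 3), cpd i (fun y => (pmul Γ (C y)).2 k) z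
      = (pmul Γ (p i)).2 k := by
    intro i k
    have h1 : HasFDerivAt (fun y => (pmul Γ (C y)).2 k)
        (((ContinuousLinearMap.proj k).comp (ContinuousLinearMap.snd ℂ ℂ Vec3)).comp
          ((PLc Γ).comp D)) z :=
      HasFDerivAt.comp z
        ((ContinuousLinearMap.proj k).comp (ContinuousLinearMap.snd ℂ ℂ Vec3)).hasFDerivAt hG
    rw [cpd, h1.fderiv, ← hp]; rfl
  refine Prod.ext ?_ (funext fun j => ?_)
  · simp only [Dc, cdiv3, Fin.sum_univ_three, hL1, hL2, hR1, hR2]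
    simp [TLc, TL, pmul, toPv, dot3, cross3, Fin.sum_univ_three, Fin.sum_univ_four,
      ofPv_zero', ofPv_one', ofPv_two', ofPv_three', fs0, fs1, fs2, Pi.single_apply, smul_eq_mul]
    ring_nf
    try simp only [Complex.I_sq]
    try ring
  · fin_cases j <;>
    · simp only [Dc, cdiv3, cgrad3, ccurl3, Fin.sum_univ_three, hL1, hL2, hR1, hR2]
      simp [TLc, TL, pmul, toPv, dot3, cross3, Fin.sum_univ_three, Fin.sum_univ_four,
        ofPv_zero', ofPv_one', ofPv_two', ofPv_three', fs0, fs1, fs2, Pi.single_apply, smul_eq_mul]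
      ring_nf
      try simp only [Complex.I_sq]
      try ring
end
end

section
/- Chain rule for ∂ under right paravector translation (Theorem 3.2 of the paper): let Γ be a constant paravector and T'_Γ : ℂ⁴ → ℂ⁴ the linear map X ↦ XΓ given by right paravector multiplication, and let C : ℂ⁴ → ℂ × ℂ³ be a holomorphic paravector field. Then for all X, ∂(C ∘ T'_Γ)(X) = Γ·(∂C)(T'_Γ X). -/
noncomputable section
open scoped BigOperators

/-! Writing `eᵢ` for the coordinate unit paravectors, `∂ = ∑ᵢ eᵢ ∂ᵢ` as a paravector product.
By the chain rule `∂ᵢ (C ∘ T'_Γ) = ∑ⱼ (eᵢ Γ)ⱼ (∂ⱼ C) ∘ T'_Γ`, and `∑ᵢ (eᵢ Γ)ⱼ eᵢ = Γ eⱼ`: with respect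
to the coordinate bilinear form, the transpose of right multiplication by `Γ` is left
multiplication by `Γ`. Associativity of the paravector product then gives
`∂ (C ∘ T'_Γ) = ∑ⱼ (Γ eⱼ) ∂ⱼ C = Γ ∂C`. -/

lemma add_pmul (A B C : Pv) : pmul (A + B) C = pmul A C + pmul B C := by
  ext j
  · simp [pmul, dot3, Fin.sum_univ_three]; ring
  · fin_cases j <;> simp [pmul, cross3] <;> ring

lemma pmul_add (A B C : Pv) : pmul A (B + C) = pmul A B + pmul A C := by
  ext j
  · simp [pmul, dot3, Fin.sum_univ_three]; ring
  · fin_cases j <;> simp [pmul, cross3] <;> ring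

lemma smul_pmul (c : ℂ) (A B : Pv) : pmul (c • A) B = c • pmul A B := by
  ext j
  · simp [pmul, dot3, Fin.sum_univ_three]; ring
  · fin_cases j <;> simp [pmul, cross3] <;> ring

lemma pmul_smul (c : ℂ) (A B : Pv) : pmul A (c • B) = c • pmul A B := by
  ext j
  · simp [pmul, dot3, Fin.sum_univ_three]; ring
  · fin_cases j <;> simp [pmul, cross3] <;> ring

lemma pmul_assoc (A B C : Pv) : pmul (pmul A B) C = pmul A (pmul B C) := by
  ext j
  · simp [pmul, dot3, cross3, Fin.sum_univ_three]; ring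
  · fin_cases j <;> simp [pmul, dot3, cross3, Fin.sum_univ_three] <;> ring_nf <;>
      simp only [Complex.I_sq] <;> ring

def pmulₗ : Pv →ₗ[ℂ] Pv →ₗ[ℂ] Pv :=
  LinearMap.mk₂ ℂ pmul add_pmul smul_pmul pmul_add pmul_smul

lemma pmulₗ_apply (A B : Pv) : pmulₗ A B = pmul A B := rfl

def rightMulCLM (Γ : Pv) : CPt →L[ℂ] CPt :=
  LinearMap.toContinuousLinearMap <|
    (Fin.consLinearEquiv ℂ fun _ : Fin 4 => ℂ).toLinearMap ∘ₗ pmulₗ.flip Γ ∘ₗ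
      (Fin.consLinearEquiv ℂ fun _ : Fin 4 => ℂ).symm.toLinearMap

lemma rightMulCLM_apply (Γ : Pv) (y : CPt) : rightMulCLM Γ y = ofPv (pmul (toPv y) Γ) := rfl

lemma ofPv_eq_vecCons (A : Pv) : ofPv A = ![A.1, A.2 0, A.2 1, A.2 2] := by
  ext i; fin_cases i <;> rfl

def unitPv (i : Fin 4) : Pv := toPv (Pi.single i 1)

lemma sum_rightMulCLM_smul_unitPv (Γ : Pv) (j : Fin 4) :
    ∑ i, rightMulCLM Γ (Pi.single i 1) j • unitPv i = pmul Γ (unitPv j) := by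
  ext k
  · fin_cases j <;>
      simp [rightMulCLM_apply, ofPv_eq_vecCons, Fin.sum_univ_four, unitPv, toPv, pmul, dot3,
        cross3, Fin.sum_univ_three]
  · fin_cases j <;> fin_cases k <;>
      simp [rightMulCLM_apply, ofPv_eq_vecCons, Fin.sum_univ_four, unitPv, toPv, pmul, dot3,
        cross3, Fin.sum_univ_three]

def pcpd (i : Fin 4) (A : CPt → Pv) (x : CPt) : Pv := fderiv ℂ A x (Pi.single i 1)

section
variable {A : CPt → Pv} {x : CPt}

lemma cpd_fst (hA : DifferentiableAt ℂ A x) (i : Fin 4) :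
    cpd i (fun y => (A y).1) x = (pcpd i A x).1 := by
  rw [cpd, fderiv.fst hA]; rfl

lemma cpd_snd_apply (hA : DifferentiableAt ℂ A x) (i : Fin 4) (k : Fin 3) :
    cpd i (fun y => (A y).2 k) x = (pcpd i A x).2 k := by
  rw [cpd, fderiv_apply hA.snd k, fderiv.snd hA]; rfl

lemma Dc_eq_sum_pmul (hA : DifferentiableAt ℂ A x) :
    Dc A x = ∑ i, pmul (unitPv i) (pcpd i A x) := by
  ext j
  · simp [Dc, cdiv3, cpd_fst hA, cpd_snd_apply hA, Fin.sum_univ_four, Fin.sum_univ_three,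
      unitPv, toPv, pmul, dot3, cross3]
    ring
  · fin_cases j <;>
      simp [Dc, cgrad3, ccurl3, cpd_fst hA, cpd_snd_apply hA, Fin.sum_univ_four,
        Fin.sum_univ_three, unitPv, toPv, pmul, dot3, cross3] <;> ring

lemma pcpd_comp_clm (L : CPt →L[ℂ] CPt) (hA : DifferentiableAt ℂ A (L x)) (i : Fin 4) :
    pcpd i (A ∘ L) x = ∑ j, L (Pi.single i 1) j • pcpd j A (L x) := by
  rw [pcpd, fderiv_comp x hA L.differentiableAt, L.fderiv, ContinuousLinearMap.comp_apply]
  conv_lhs => rw [pi_eq_sum_univ' (L (Pi.single i 1))]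
  simp only [map_sum, map_smul, pcpd]

end

theorem Dc_right_translation (Γ : Pv) (C : CPt → Pv) (hC : Differentiable ℂ C) :
    ∀ x : CPt,
      Dc (fun y => C (ofPv (pmul (toPv y) Γ))) x =
        pmul Γ (Dc C (ofPv (pmul (toPv x) Γ))) := by
  intro x
  set T := rightMulCLM Γ with hT
  change Dc (C ∘ T) x = pmul Γ (Dc C (T x))
  calc Dc (C ∘ T) x = ∑ i, pmul (unitPv i) (pcpd i (C ∘ T) x) :=
        Dc_eq_sum_pmul ((hC.comp T.differentiable) x)
    _ = ∑ i, pmul (unitPv i) (∑ j, T (Pi.single i 1) j • pcpd j C (T x)) := by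
        simp only [pcpd_comp_clm T (hC (T x))]
    _ = ∑ j, pmul (∑ i, T (Pi.single i 1) j • unitPv i) (pcpd j C (T x)) := by
        simp only [← pmulₗ_apply, map_sum, map_smul, LinearMap.sum_apply, LinearMap.smul_apply]
        exact Finset.sum_comm
    _ = ∑ j, pmul Γ (pmul (unitPv j) (pcpd j C (T x))) := by
        simp only [hT, sum_rightMulCLM_smul_unitPv, pmul_assoc]
    _ = pmul Γ (Dc C (T x)) := by
        rw [Dc_eq_sum_pmul (hC _), ← pmulₗ_apply, map_sum]
        rfl
end
end

section
/- Left multiplication by a paravector, viewed as a ℂ-linear map on ℂ⁴, has determinant equal to the square of the paravector determinant: for Γ = (α, 𝛃), the linear map T_Γ : (t, 𝐱) ↦ (αt + 𝛃·𝐱, t𝛃 + α𝐱 + i 𝛃×𝐱) on ℂ⁴ satisfies det(T_Γ) = (α² − 𝛃·𝛃)². -/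
noncomputable section
open scoped BigOperators

/-! The Pauli matrices identify the paravector `(α, 𝛃)` with `α + 𝛃·σ ∈ M₂(ℂ)`: products of
paravectors become matrix products (`σⱼσₖ = δⱼₖ + i εⱼₖₗ σₗ`) and `detP` becomes the matrix
determinant. Left multiplication by a `2 × 2` matrix acts on the two columns independently, so its
determinant is the square of the matrix determinant. -/

theorem LinearMap.det_mulLeft_matrix {R n : Type*} [CommRing R] [Fintype n] [DecidableEq n]
    (M : Matrix n n R) :
    LinearMap.det (LinearMap.mulLeft R M) = M.det ^ Fintype.card n := by
  let e : Matrix n n R ≃ₗ[R] (n → n → R) := Matrix.transposeLinearEquiv n n R R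
  have columnwise : (e : Matrix n n R →ₗ[R] n → n → R) ∘ₗ LinearMap.mulLeft R M ∘ₗ e.symm =
      LinearMap.pi fun j => (Matrix.toLin' M).comp (LinearMap.proj (φ := fun _ : n => n → R) j) :=
    rfl
  rw [← LinearMap.det_conj _ e, columnwise, LinearMap.det_pi]
  simp [LinearMap.det_toLin']

open Complex

def pauliMatrix (A : Pv) : Matrix (Fin 2) (Fin 2) ℂ :=
  !![A.1 + A.2 2, A.2 0 - I * A.2 1; A.2 0 + I * A.2 1, A.1 - A.2 2]

theorem pauliMatrix_pmul (A B : Pv) :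
    pauliMatrix (pmul A B) = pauliMatrix A * pauliMatrix B := by
  ext i j
  fin_cases i <;> fin_cases j <;>
    simp [pauliMatrix, pmul, dot3, cross3, Matrix.mul_apply, Fin.sum_univ_two,
      Fin.sum_univ_three] <;> ring_nf <;> simp only [I_sq] <;> ring

theorem det_pauliMatrix (A : Pv) : (pauliMatrix A).det = detP A := by
  simp [pauliMatrix, detP, dot3, Matrix.det_fin_two_of, Fin.sum_univ_three]
  ring_nf
  simp only [I_sq]
  ring

def pauliEquiv : CPt ≃ₗ[ℂ] Matrix (Fin 2) (Fin 2) ℂ where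
  toFun X := pauliMatrix (toPv X)
  map_add' X Y := by ext i j; fin_cases i <;> fin_cases j <;> simp [pauliMatrix, toPv] <;> ring
  map_smul' c X := by ext i j; fin_cases i <;> fin_cases j <;> simp [pauliMatrix, toPv] <;> ring
  invFun M := ![(M 0 0 + M 1 1) / 2, (M 1 0 + M 0 1) / 2, (M 1 0 - M 0 1) / (2 * I),
    (M 0 0 - M 1 1) / 2]
  left_inv X := by
    funext i
    fin_cases i <;> simp [pauliMatrix, toPv]
    field_simp
    ring
  right_inv M := by
    ext i j; fin_cases i <;> fin_cases j <;> (simp [pauliMatrix, toPv]; field_simp; ring)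

theorem det_left_mul (Γ : Pv) (f : CPt →ₗ[ℂ] CPt)
    (hf : ∀ X : CPt, f X = ofPv (pmul Γ (toPv X))) :
    LinearMap.det f = (detP Γ) ^ 2 := by
  have conj : (pauliEquiv : CPt →ₗ[ℂ] _) ∘ₗ f ∘ₗ pauliEquiv.symm =
      LinearMap.mulLeft ℂ (pauliMatrix Γ) := by
    have intertwine (X : CPt) : pauliEquiv (f X) = pauliMatrix Γ * pauliEquiv X := by
      rw [hf]
      exact pauliMatrix_pmul Γ (toPv X)
    ext M : 1
    simp [intertwine]
  rw [← LinearMap.det_conj f pauliEquiv, conj, LinearMap.det_mulLeft_matrix, det_pauliMatrix,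
    Fintype.card_fin]
end
end
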